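/- arXiv:math-ph/0101014 — 8 statements merged into one kernel-verified Lean document; each statement's English description precedes it below -/
import Mathlib

section
/- Let d > 1 and let f : {0,1}^{ℤ^d} → {0,1} be a standard transition function such that the all-ones configuration attracts D_f. Assume there exists a direction p such that D_f has velocities V_p and V_{−p} in directions p and −p with V_p + V_{−p} > 0. Then for every ε ∈ (0,1] there is a constant c > 0 such that every probability measure μ invariant for N_ε D_f satisfies μ(1_{S_{0,L}}) ≥ exp(−c·(L^{d−1} + 1)) for every integer L ≥ 0. -/
open MeasureTheory ENNReal

namespace CAPaper

/-- Sites of the lattice `ℤ^d`. -/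
abbrev Site (d : ℕ) := Fin d → ℤ

/-- Configurations `{0,1}^{ℤ^d}`, values in `Bool` (`false` = 0, `true` = 1). -/
abbrev Config (d : ℕ) := Site d → Bool

/-- Euclidean norm on `ℝ^d`. -/
noncomputable def enorm {d : ℕ} (v : Fin d → ℝ) : ℝ := Real.sqrt (∑ k, v k ^ 2)

/-- Euclidean scalar product on `ℝ^d`. -/
noncomputable def edot {d : ℕ} (u v : Fin d → ℝ) : ℝ := ∑ k, u k * v k

/-- The embedding `ℤ^d → ℝ^d`. -/
def embed {d : ℕ} (i : Site d) : Fin d → ℝ := fun k => (i k : ℝ)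

/-- Euclidean norm of a lattice point. -/
noncomputable def enormZ {d : ℕ} (i : Site d) : ℝ := enorm (embed i)

open Classical in
/-- `Conf S` is the configuration whose indicator is `S`. -/
noncomputable def Conf {d : ℕ} (S : Set (Site d)) : Config d :=
  fun i => if i ∈ S then true else false

/-- `f` is local with support `Δ`. -/
def IsLocal {d : ℕ} (f : Config d → Bool) (Δ : Finset (Site d)) : Prop :=
  ∀ x y : Config d, (∀ i ∈ Δ, x i = y i) → f x = f y

/-- `f` is monotonic. -/
def Monotonic {d : ℕ} (f : Config d → Bool) : Prop :=
  ∀ x y : Config d, (∀ i, x i ≤ y i) → f x ≤ f y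

/-- `f` is a standard transition function with support `Δ`. -/
def Standard {d : ℕ} (f : Config d → Bool) (Δ : Finset (Site d)) : Prop :=
  IsLocal f Δ ∧ Monotonic f ∧ ∃ x y : Config d, f x ≠ f y

/-- The deterministic cellular automaton `D_f`. -/
def Df {d : ℕ} (f : Config d → Bool) (x : Config d) : Config d :=
  fun i => f (fun j => x (i + j))

/-- The invariant configuration `x` attracts `D`. -/
def Attracts {d : ℕ} (D : Config d → Config d) (x : Config d) : Prop :=
  D x = x ∧ ∀ y : Config d, {i | y i ≠ x i}.Finite → ∃ t : ℕ, D^[t] y = x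

/-- `D_f` has velocity `V` in the direction `p`. -/
def HasVelocity {d : ℕ} (f : Config d → Bool) (p : Fin d → ℝ) (V : ℝ) : Prop :=
  ∀ C : ℝ, Df f (Conf {i | edot (embed i) p ≤ C}) = Conf {i | edot (embed i) p ≤ C + V}

/-- Probability that, after the one-sided noise with parameter `ε` is applied to a
configuration whose value at a given site is `xi`, that site carries the value `b`. -/
noncomputable def noiseProb (ε : ℝ) (xi b : Bool) : ℝ≥0∞ :=
  if xi then (if b then 1 else 0)
  else (if b then ENNReal.ofReal ε else ENNReal.ofReal (1 - ε))

/-- `ν` is the result of one step of the stochastic automaton `N_ε D` applied to `μ`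
(first apply `D`, then independent one-sided noise at every site); since the noise measure
is a product measure, this is equivalent to specifying all cylinder probabilities of `ν`. -/
def IsStep {ι : Type*} (ε : ℝ) (D : (ι → Bool) → (ι → Bool)) (μ ν : Measure (ι → Bool)) : Prop :=
  ∀ (Λ : Finset ι) (b : ι → Bool),
    ν {y | ∀ i ∈ Λ, y i = b i} = ∫⁻ x, ∏ i ∈ Λ, noiseProb ε (D x i) (b i) ∂μ

/-- `μ` is invariant for the stochastic automaton `N_ε D`. -/
def Invariant {ι : Type*} (ε : ℝ) (D : (ι → Bool) → (ι → Bool)) (μ : Measure (ι → Bool)) : Prop :=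
  IsStep ε D μ μ

/-- The cylinder event: all sites of `Λ` carry the value 1. -/
def ones {ι : Type*} (Λ : Set ι) : Set (ι → Bool) := {x | ∀ i ∈ Λ, x i = true}


/-!
By monotonicity and invariance, `μ (1_S) ≤ μ (1_T)` whenever `D_f (Conf S)` is `1` on `T`,
while the noise alone gives `μ (1_T) ≥ ε ^ |T|`. A slab orthogonal to `p` whose width exceeds
twice the interaction range advances by `V` on one face and `V'` on the other in each step, so
after `t = O(L)` steps a slab of bounded width, truncated to a box of side `O(L)`, covers the ball
of radius `L`. That truncated slab has `O(L ^ (d - 1))` sites, whence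
`μ (1_{S_{0,L}}) ≥ ε ^ O(L ^ (d - 1))`.
-/

section Noise

variable {ι : Type*} {ε : ℝ} {D : (ι → Bool) → (ι → Bool)} {μ : Measure (ι → Bool)}

lemma measurableSet_ones (Λ : Finset ι) : MeasurableSet (ones (Λ : Set ι)) := by
  have h : ones (Λ : Set ι) = ⋂ i ∈ Λ, {x | x i = true} := by ext; simp [ones]
  rw [h]
  exact Λ.measurableSet_biInter fun i _ =>
    measurableSet_eq_fun (measurable_pi_apply i) measurable_const

lemma ones_anti {S T : Set ι} (h : S ⊆ T) : ones T ⊆ ones S :=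
  fun _ hx i hi => hx i (h hi)

lemma Invariant.measure_ones_eq (hμ : Invariant ε D μ) (Λ : Finset ι) :
    μ (ones Λ) = ∫⁻ x, ∏ i ∈ Λ, noiseProb ε (D x i) true ∂μ :=
  hμ Λ fun _ => true

lemma Invariant.ofReal_pow_card_le [IsProbabilityMeasure μ] (hμ : Invariant ε D μ)
    (hε1 : ε ≤ 1) (Λ : Finset ι) : ENNReal.ofReal ε ^ Λ.card ≤ μ (ones Λ) := by
  have hnoise : ∀ b, ENNReal.ofReal ε ≤ noiseProb ε b true := by
    rintro (_ | _) <;> simp [noiseProb, hε1]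
  calc ENNReal.ofReal ε ^ Λ.card = ∫⁻ _, ENNReal.ofReal ε ^ Λ.card ∂μ := by simp
    _ ≤ _ := lintegral_mono fun x => by
        rw [← Finset.prod_const]; exact Finset.prod_le_prod' fun i _ => hnoise _
    _ = μ (ones Λ) := (hμ.measure_ones_eq Λ).symm

lemma Invariant.measure_ones_le (hμ : Invariant ε D μ) {S T : Finset ι}
    (hST : ∀ x ∈ ones (S : Set ι), ∀ i ∈ T, D x i = true) :
    μ (ones S) ≤ μ (ones T) := by
  rw [hμ.measure_ones_eq T, ← lintegral_indicator_one (measurableSet_ones S)]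
  refine lintegral_mono fun x => ?_
  by_cases hx : x ∈ ones (S : Set ι)
  · rw [Set.indicator_of_mem hx, Pi.one_apply, Finset.prod_eq_one]
    intro i hi
    simp [noiseProb, hST x hx i hi]
  · simp [Set.indicator_of_notMem hx]

end Noise

section Geometry

variable {d : ℕ}

lemma embed_add (i j : Site d) : embed (i + j) = embed i + embed j := by
  funext k; simp [embed]

lemma edot_embed_add (i j : Site d) (p : Fin d → ℝ) :
    edot (embed (i + j)) p = edot (embed i) p + edot (embed j) p := by
  simp only [edot, embed_add, Pi.add_apply, add_mul, Finset.sum_add_distrib]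

lemma edot_neg_right (u v : Fin d → ℝ) : edot u (-v) = -edot u v := by
  simp [edot]

lemma abs_edot_le (u v : Fin d → ℝ) : |edot u v| ≤ enorm u * enorm v := by
  have h := Real.sum_mul_le_sqrt_mul_sqrt Finset.univ u (-v)
  simp only [Pi.neg_apply, mul_neg, Finset.sum_neg_distrib, neg_sq] at h
  exact abs_le.mpr ⟨neg_le.mp h, Real.sum_mul_le_sqrt_mul_sqrt _ u v⟩

lemma abs_le_enormZ (i : Site d) (k : Fin d) : |(i k : ℝ)| ≤ enormZ i := by
  rw [← Real.sqrt_sq_eq_abs]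
  exact Real.sqrt_le_sqrt <| Finset.single_le_sum (f := fun k => (i k : ℝ) ^ 2)
    (fun _ _ => sq_nonneg _) (Finset.mem_univ k)

lemma exists_ne_zero_of_enorm_eq_one {p : Fin d → ℝ} (hp : enorm p = 1) : ∃ k, p k ≠ 0 := by
  by_contra! h
  simp [enorm, h] at hp

open Classical in
noncomputable def slabBox (p : Fin d → ℝ) (a b : ℝ) (R : ℕ) : Finset (Site d) :=
  {i ∈ Fintype.piFinset fun _ => Finset.Icc (-(R : ℤ)) R |
    a ≤ edot (embed i) p ∧ edot (embed i) p ≤ b}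

variable {p : Fin d → ℝ} {a b : ℝ} {R : ℕ}

lemma mem_slabBox {i : Site d} :
    i ∈ slabBox p a b R ↔
      (a ≤ edot (embed i) p ∧ edot (embed i) p ≤ b) ∧ ∀ k, |i k| ≤ R := by
  simp [slabBox, abs_le, and_comm]

lemma slabBox_mono {a' b' : ℝ} (ha : a' ≤ a) (hb : b ≤ b') :
    slabBox p a b R ⊆ slabBox p a' b' R := by
  intro i hi
  rw [mem_slabBox] at hi ⊢
  exact ⟨⟨ha.trans hi.1.1, hi.1.2.trans hb⟩, hi.2⟩

lemma ball_subset_slabBox (hp : enorm p = 1) (L : ℕ) :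
    {i : Site d | enormZ i ≤ L} ⊆ slabBox p (-L) L L := by
  intro i hi
  have hdot : |edot (embed i) p| ≤ L :=
    (abs_edot_le (embed i) p).trans (by rw [hp, mul_one]; exact hi)
  refine mem_slabBox.mpr ⟨abs_le.mp hdot, fun k => ?_⟩
  exact_mod_cast (abs_le_enormZ i k).trans hi

end Geometry

section Automaton

variable {d : ℕ} {f : Config d → Bool} {Δ : Finset (Site d)} {p : Fin d → ℝ} {V V' : ℝ}

lemma Df_conf_apply_congr (hloc : IsLocal f Δ) {S T : Set (Site d)} {i : Site d}
    (h : ∀ j ∈ Δ, (i + j ∈ S ↔ i + j ∈ T)) : Df f (Conf S) i = Df f (Conf T) i :=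
  hloc _ _ fun j hj => by simp [Conf, h j hj]

lemma HasVelocity.Df_conf_apply (hV : HasVelocity f p V) (C : ℝ) {i : Site d}
    (hi : edot (embed i) p ≤ C + V) : Df f (Conf {j | edot (embed j) p ≤ C}) i = true := by
  simp [hV C, Conf, hi]

lemma Df_conf_apply_le (hmono : Monotonic f) {S : Set (Site d)} {x : Config d}
    (hx : x ∈ ones S) (i : Site d) : Df f (Conf S) i ≤ Df f x i := by
  refine hmono _ _ fun j => ?_
  by_cases h : i + j ∈ S
  · simp [Conf, h, hx _ h]
  · simp [Conf, h]

lemma Invariant.measure_ones_le_of_Df_conf {ε : ℝ} {μ : Measure (Config d)}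
    (hμ : Invariant ε (Df f) μ) (hmono : Monotonic f) {S T : Finset (Site d)}
    (h : ∀ i ∈ T, Df f (Conf S) i = true) : μ (ones S) ≤ μ (ones T) :=
  hμ.measure_ones_le fun _ hx i hi =>
    le_antisymm (Bool.le_true _) (h i hi ▸ Df_conf_apply_le hmono hx i)

variable (hloc : IsLocal f Δ) (hV : HasVelocity f p V) (hV' : HasVelocity f (-p) V')
  {rp : ℝ} (hrp : ∀ j ∈ Δ, |edot (embed j) p| ≤ rp) {a b : ℝ}

include hloc hV hV' hrp in
/-- Near each face the slab coincides, on the neighbourhood `i + Δ`, with a half-space. -/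
lemma Df_conf_slab_apply (hab : a + 2 * rp ≤ b) {i : Site d}
    (hi₁ : a - V' ≤ edot (embed i) p) (hi₂ : edot (embed i) p ≤ b + V) :
    Df f (Conf {j | a ≤ edot (embed j) p ∧ edot (embed j) p ≤ b}) i = true := by
  have hnear : ∀ j ∈ Δ, |edot (embed (i + j)) p - edot (embed i) p| ≤ rp := fun j hj => by
    simpa [edot_embed_add] using hrp j hj
  by_cases htop : a + rp ≤ edot (embed i) p
  · rw [Df_conf_apply_congr hloc (T := {j | edot (embed j) p ≤ b})]
    · exact hV.Df_conf_apply b hi₂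
    · intro j hj
      have := abs_le.mp (hnear j hj)
      exact ⟨fun h => h.2, fun h => ⟨by linarith, h⟩⟩
  · rw [Df_conf_apply_congr hloc (T := {j | edot (embed j) (-p) ≤ -a})]
    · exact hV'.Df_conf_apply (-a) (by rw [edot_neg_right]; linarith)
    · intro j hj
      have := abs_le.mp (hnear j hj)
      simp only [Set.mem_ofPred_eq, edot_neg_right, neg_le_neg_iff]
      exact ⟨fun h => h.1, fun h => ⟨h, by linarith⟩⟩

variable {rb : ℕ} (hrb : ∀ j ∈ Δ, ∀ k, |j k| ≤ rb)

include hloc hV hV' hrp hrb in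
lemma Df_conf_slabBox_apply (hab : a + 2 * rp ≤ b) {R : ℕ} {i : Site d}
    (hi : i ∈ slabBox p (a - V') (b + V) R) :
    Df f (Conf ↑(slabBox p a b (R + rb))) i = true := by
  rw [mem_slabBox] at hi
  rw [Df_conf_apply_congr hloc (T := {j | a ≤ edot (embed j) p ∧ edot (embed j) p ≤ b})]
  · exact Df_conf_slab_apply hloc hV hV' hrp hab hi.1.1 hi.1.2
  · intro j hj
    have hbox : ∀ k, |i k + j k| ≤ R + rb := fun k =>
      (abs_add_le _ _).trans (add_le_add (hi.2 k) (hrb j hj k))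
    simp [mem_slabBox, hbox]

include hloc hV hV' hrp hrb in
lemma Invariant.measure_ones_slabBox_le {ε : ℝ} {μ : Measure (Config d)}
    (hμ : Invariant ε (Df f) μ) (hmono : Monotonic f) (hVV : 0 ≤ V + V')
    (hab : a + 2 * rp ≤ b) (t R : ℕ) :
    μ (ones ↑(slabBox p a b (R + t * rb))) ≤
      μ (ones ↑(slabBox p (a - t * V') (b + t * V) R)) := by
  induction t generalizing R with
  | zero => simp
  | succ t ih =>
    have hwidth : a - t * V' + 2 * rp ≤ b + t * V := by
      nlinarith [mul_nonneg (Nat.cast_nonneg t : (0 : ℝ) ≤ t) hVV]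
    calc μ (ones ↑(slabBox p a b (R + (t + 1) * rb)))
        = μ (ones ↑(slabBox p a b (R + rb + t * rb))) := by ring_nf
      _ ≤ μ (ones ↑(slabBox p (a - t * V') (b + t * V) (R + rb))) := ih _
      _ ≤ μ (ones ↑(slabBox p (a - t * V' - V') (b + t * V + V) R)) :=
        hμ.measure_ones_le_of_Df_conf hmono fun i hi =>
          Df_conf_slabBox_apply hloc hV hV' hrp hrb hwidth hi
      _ = μ (ones ↑(slabBox p (a - ↑(t + 1) * V') (b + ↑(t + 1) * V) R)) := by
        push_cast; ring_nf

end Automaton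

section Counting

variable {d : ℕ} {p : Fin d → ℝ} {k₀ : Fin d} {a b : ℝ} {R : ℕ}

lemma abs_sub_apply_le_of_update_eq (hk₀ : p k₀ ≠ 0) {i y : Site d}
    (hi : i ∈ slabBox p a b R) (hy : y ∈ slabBox p a b R)
    (hiy : Function.update i k₀ 0 = Function.update y k₀ 0) :
    |i k₀ - y k₀| ≤ ⌈(b - a) / |p k₀|⌉₊ := by
  have hoff : ∀ k ≠ k₀, i k = y k := fun k hk => by
    simpa [Function.update_of_ne hk] using congrFun hiy k
  have hsplit : edot (embed i) p - edot (embed y) p = (i k₀ - y k₀ : ℝ) * p k₀ := by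
    rw [edot, edot, ← Finset.sum_sub_distrib, Finset.sum_eq_single k₀ (fun k _ hk => by
      simp [embed, hoff k hk]) (by simp)]
    simp [embed, sub_mul]
  rw [mem_slabBox] at hi hy
  have hdiff : |(i k₀ - y k₀ : ℝ)| * |p k₀| ≤ b - a := by
    rw [← abs_mul, ← hsplit, abs_le]
    constructor <;> linarith [hi.1.1, hi.1.2, hy.1.1, hy.1.2]
  have hreal : |(i k₀ - y k₀ : ℝ)| ≤ ⌈(b - a) / |p k₀|⌉₊ :=
    ((le_div_iff₀ (abs_pos.mpr hk₀)).mpr hdiff).trans (Nat.le_ceil _)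
  exact_mod_cast hreal

lemma card_slabBox_le (hk₀ : p k₀ ≠ 0) (a b : ℝ) (R : ℕ) :
    (slabBox p a b R).card ≤ (2 * ⌈(b - a) / |p k₀|⌉₊ + 1) * (2 * R + 1) ^ (d - 1) := by
  classical
  set s := slabBox p a b R
  set m := ⌈(b - a) / |p k₀|⌉₊
  set g : Site d → Site d := fun i => Function.update i k₀ 0
  have hfiber : ∀ w ∈ s.image g, (s.filter fun i => g i = w).card ≤ 2 * m + 1 := by
    intro w hw
    obtain ⟨y, hy, rfl⟩ := Finset.mem_image.mp hw
    calc (s.filter fun i => g i = g y).card ≤ (Finset.Icc (y k₀ - m) (y k₀ + m)).card := by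
          refine Finset.card_le_card_of_injOn (· k₀) (fun i hi => ?_) (fun i hi i' hi' h => ?_)
          · simp only [Finset.coe_filter, Set.mem_ofPred_eq] at hi
            have := abs_le.mp (abs_sub_apply_le_of_update_eq hk₀ hi.1 hy hi.2)
            simp only [Finset.coe_Icc, Set.mem_Icc]
            omega
          · simp only [Finset.coe_filter, Set.mem_ofPred_eq] at hi hi'
            funext k
            by_cases hk : k = k₀
            · subst hk; exact h
            · simpa [g, Function.update_of_ne hk] using congrFun (hi.2.trans hi'.2.symm) k
      _ = 2 * m + 1 := by simp [Int.card_Icc]; omega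
  have himage : (s.image g).card ≤ (2 * R + 1) ^ (d - 1) := by
    have hsub : s.image g ⊆ Fintype.piFinset
        (Function.update (fun _ => Finset.Icc (-(R : ℤ)) R) k₀ {0}) := by
      intro w hw
      obtain ⟨y, hy, rfl⟩ := Finset.mem_image.mp hw
      have hbox := (mem_slabBox.mp hy).2
      simp only [Fintype.mem_piFinset]
      intro k
      by_cases hk : k = k₀
      · subst hk; simp [g]
      · simpa [g, hk, abs_le] using hbox k
    refine (Finset.card_le_card hsub).trans_eq ?_
    rw [Fintype.card_piFinset, Finset.prod_congr rfl fun k _ =>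
      Function.apply_update (fun _ t => Finset.card t) _ k₀ _ k,
      Finset.prod_update_of_mem (Finset.mem_univ k₀)]
    simp [Int.card_Icc, Finset.card_sdiff]
    congr 1; omega
  calc s.card ≤ (2 * m + 1) * (s.image g).card := Finset.card_le_mul_card_image s _ hfiber
    _ ≤ _ := Nat.mul_le_mul_left _ himage

end Counting

lemma mul_add_pow_le {A B L : ℝ} (hA : 0 ≤ A) (hB : 0 ≤ B) (hL : 0 ≤ L) (e : ℕ) :
    (A * L + B) ^ e ≤ (A + B) ^ e * (L ^ e + 1) := by
  have hmax : A * L + B ≤ (A + B) * max L 1 := by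
    nlinarith [le_max_left L 1, le_max_right L 1]
  have hpow : max L 1 ^ e ≤ L ^ e + 1 := by
    rcases le_total L 1 with h | h
    · rw [max_eq_right h, one_pow]; linarith [pow_nonneg hL e]
    · rw [max_eq_left h]; linarith
  calc (A * L + B) ^ e ≤ ((A + B) * max L 1) ^ e := pow_le_pow_left₀ (by positivity) hmax e
    _ = (A + B) ^ e * max L 1 ^ e := mul_pow _ _ _
    _ ≤ (A + B) ^ e * (L ^ e + 1) := mul_le_mul_of_nonneg_left hpow (by positivity)

lemma exp_neg_le_pow {ε c : ℝ} (hε : 0 < ε) {N : ℕ} (h : N * |Real.log ε| ≤ c) :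
    Real.exp (-c) ≤ ε ^ N := by
  rw [← Real.exp_log (pow_pos hε N), Real.log_pow, Real.exp_le_exp]
  nlinarith [mul_le_mul_of_nonneg_left (neg_abs_le (Real.log ε)) N.cast_nonneg (α := ℝ)]

section Propagation

variable {d : ℕ} {f : Config d → Bool} {Δ : Finset (Site d)} {p : Fin d → ℝ} {V V' : ℝ}

theorem exists_finset_card_le_measure_ones_le_ball (hloc : IsLocal f Δ) (hmono : Monotonic f)
    (hp : enorm p = 1) (hV : HasVelocity f p V) (hV' : HasVelocity f (-p) V')
    (hVV : 0 < V + V') :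
    ∃ K : ℝ, 0 ≤ K ∧ ∀ L : ℕ, ∃ T : Finset (Site d),
      (T.card : ℝ) ≤ K * ((L : ℝ) ^ (d - 1) + 1) ∧
      ∀ (ε : ℝ) (μ : Measure (Config d)), Invariant ε (Df f) μ →
        μ (ones T) ≤ μ (ones {i | enormZ i ≤ L}) := by
  obtain ⟨k₀, hk₀⟩ := exists_ne_zero_of_enorm_eq_one hp
  set rp := ∑ j ∈ Δ, |edot (embed j) p|
  have hrp : ∀ j ∈ Δ, |edot (embed j) p| ≤ rp := fun j hj =>
    Finset.single_le_sum (f := fun j => |edot (embed j) p|) (fun _ _ => abs_nonneg _) hj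
  set rb := Δ.sup fun j => Finset.univ.sup fun k => (j k).natAbs
  have hrb : ∀ j ∈ Δ, ∀ k, |j k| ≤ rb := fun j hj k => by
    rw [Int.abs_eq_natAbs]
    exact_mod_cast (Finset.le_sup (f := fun k => (j k).natAbs) (Finset.mem_univ k)).trans
      (Finset.le_sup (f := fun j => Finset.univ.sup fun k => (j k).natAbs) hj)
  set n : ℕ := 2 * ⌈2 * rp / |p k₀|⌉₊ + 1
  set A : ℝ := 2 + 4 * rb / (V + V')
  set B : ℝ := 2 * rb + 1
  refine ⟨n * (A + B) ^ (d - 1), by positivity, fun L => ?_⟩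
  set t := ⌈2 * L / (V + V')⌉₊
  -- After `t` steps the slab `[a, a + 2 rp]` has lower face `-L` and upper face above `L`.
  set a : ℝ := t * V' - L
  refine ⟨slabBox p a (a + 2 * rp) (L + t * rb), ?_, fun ε μ hμ => ?_⟩
  · have ht : (t : ℝ) ≤ 2 * L / (V + V') + 1 := (Nat.ceil_lt_add_one (by positivity)).le
    have hR : 2 * ((L + t * rb : ℕ) : ℝ) + 1 ≤ A * L + B := by
      have : (t : ℝ) * rb ≤ (2 * L / (V + V') + 1) * rb := by gcongr
      have : 2 * L / (V + V') * rb * 2 = 4 * rb / (V + V') * L := by ring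
      push_cast; nlinarith
    have hcard := card_slabBox_le hk₀ a (a + 2 * rp) (L + t * rb)
    rw [add_sub_cancel_left] at hcard
    calc ((slabBox p a (a + 2 * rp) (L + t * rb)).card : ℝ)
        ≤ n * (2 * ((L + t * rb : ℕ) : ℝ) + 1) ^ (d - 1) := by exact_mod_cast hcard
      _ ≤ n * (A * L + B) ^ (d - 1) := by gcongr
      _ ≤ n * ((A + B) ^ (d - 1) * ((L : ℝ) ^ (d - 1) + 1)) := by
        gcongr; exact mul_add_pow_le (by positivity) (by positivity) (by positivity) _
      _ = _ := by ring
  · have ht : 2 * (L : ℝ) ≤ t * (V + V') := (div_le_iff₀ hVV).mp (Nat.le_ceil _)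
    have hrp0 : 0 ≤ rp := Finset.sum_nonneg fun _ _ => abs_nonneg _
    calc μ (ones ↑(slabBox p a (a + 2 * rp) (L + t * rb)))
        ≤ μ (ones ↑(slabBox p (a - t * V') (a + 2 * rp + t * V) L)) :=
          hμ.measure_ones_slabBox_le hloc hV hV' hrp hrb hmono hVV.le le_rfl t L
      _ ≤ μ (ones {i | enormZ i ≤ L}) := measure_mono <| ones_anti <|
          (ball_subset_slabBox hp L).trans <| Finset.coe_subset.mpr <|
            slabBox_mono (by linarith) (by linarith)

end Propagation

theorem stmt1_general (d : ℕ) (f : Config d → Bool) (Δ : Finset (Site d))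
    (hf : Standard f Δ)
    (hV : ∃ p : Fin d → ℝ, enorm p = 1 ∧
      ∃ V V' : ℝ, HasVelocity f p V ∧ HasVelocity f (-p) V' ∧ 0 < V + V')
    (ε : ℝ) (hε : 0 < ε) (hε1 : ε ≤ 1) :
    ∃ c : ℝ, 0 < c ∧
      ∀ μ : Measure (Config d), IsProbabilityMeasure μ → Invariant ε (Df f) μ →
        ∀ L : ℕ,
          ENNReal.ofReal (Real.exp (-(c * ((L : ℝ) ^ (d - 1) + 1)))) ≤
            μ (ones {i : Site d | enormZ i ≤ (L : ℝ)}) := by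
  obtain ⟨hloc, hmono, -⟩ := hf
  obtain ⟨p, hp, V, V', hVp, hVp', hVV⟩ := hV
  obtain ⟨K, hK, hsets⟩ :=
    exists_finset_card_le_measure_ones_le_ball hloc hmono hp hVp hVp' hVV
  refine ⟨K * |Real.log ε| + 1, by positivity, fun μ _ hμ L => ?_⟩
  obtain ⟨T, hcard, hball⟩ := hsets L
  have hX : (1 : ℝ) ≤ (L : ℝ) ^ (d - 1) + 1 := le_add_of_nonneg_left (by positivity)
  have hexp :
      (T.card : ℝ) * |Real.log ε| ≤ (K * |Real.log ε| + 1) * ((L : ℝ) ^ (d - 1) + 1) := by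
    nlinarith [mul_le_mul_of_nonneg_right hcard (abs_nonneg (Real.log ε))]
  calc ENNReal.ofReal (Real.exp (-((K * |Real.log ε| + 1) * ((L : ℝ) ^ (d - 1) + 1))))
      ≤ ENNReal.ofReal (ε ^ T.card) := ENNReal.ofReal_le_ofReal (exp_neg_le_pow hε hexp)
    _ = ENNReal.ofReal ε ^ T.card := ENNReal.ofReal_pow hε.le _
    _ ≤ μ (ones T) := hμ.ofReal_pow_card_le hε1 T
    _ ≤ μ (ones {i : Site d | enormZ i ≤ (L : ℝ)}) := hball ε μ hμ

/-- case (b) of the main theorem. -/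
theorem stmt1 (d : ℕ) (hd : 1 < d) (f : Config d → Bool) (Δ : Finset (Site d))
    (hf : Standard f Δ)
    (hattr : Attracts (Df f) (fun _ => true))
    (hV : ∃ p : Fin d → ℝ, enorm p = 1 ∧
      ∃ V V' : ℝ, HasVelocity f p V ∧ HasVelocity f (-p) V' ∧ 0 < V + V')
    (ε : ℝ) (hε : 0 < ε) (hε1 : ε ≤ 1) :
    ∃ c : ℝ, 0 < c ∧
      ∀ μ : Measure (Config d), IsProbabilityMeasure μ → Invariant ε (Df f) μ →
        ∀ L : ℕ,
          ENNReal.ofReal (Real.exp (-(c * ((L : ℝ) ^ (d - 1) + 1)))) ≤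
            μ (ones {i : Site d | enormZ i ≤ (L : ℝ)}) :=
  stmt1_general d f Δ hf hV ε hε hε1

end CAPaper
end

section
/- Let f : {0,1}^{ℤ^d} → {0,1} be a standard transition function such that σ_0 is empty. Then there exist a natural number m ≤ d+1 and affine functions φ_1,…,φ_m : ℝ^d → ℝ such that (i) for every j ∈ {1,…,m} the set {i ∈ ℤ^d : φ_j(i) ≤ 0} is a zero-set for f, (ii) φ_1 + ⋯ + φ_m is identically equal to a positive constant, and (iii) there is a point p ∈ ℝ^d with rational coordinates such that φ_j(p) > 0 for all j. -/
open MeasureTheory ENNReal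

namespace CAPaper

/-- `S` is a zero-set for `f`: `f` evaluates to 0 on the configuration whose indicator
is the complement of `S`. -/
def ZeroSet {d : ℕ} (f : Config d → Bool) (S : Set (Site d)) : Prop :=
  f (Conf Sᶜ) = false

/-- `σ₀`: the intersection of the convex hulls (in `ℝ^d`) of all zero-sets of `f`. -/
noncomputable def sigma0 {d : ℕ} (f : Config d → Bool) : Set (Fin d → ℝ) :=
  ⋂ S ∈ {S : Set (Site d) | ZeroSet f S}, convexHull ℝ (embed '' S)

/-- `φ : ℝ^d → ℝ` is an affine function. -/
def IsAffine {d : ℕ} (φ : (Fin d → ℝ) → ℝ) : Prop :=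
  ∃ (a : Fin d → ℝ) (b : ℝ), ∀ x, φ x = edot a x + b

end CAPaper

/-!
Zero-sets are upward closed and, by locality, every zero-set contains one lying in the support `Δ`,
so the convex hulls of the finitely many zero-subsets of `Δ` already have empty intersection, and
Helly's theorem leaves at most `d + 1` of them, `C₁, …, Cₘ`. Choose `kⱼ ∈ Cⱼ` minimising
`∑ ‖x - kⱼ‖²`, where `x` is the centroid of the `kⱼ`. Then each `kⱼ` is the point of `Cⱼ` nearest
to `x`, so `φⱼ = ⟪x - kⱼ, · - kⱼ⟫` is `≤ 0` on `Cⱼ`, and since `∑ (x - kⱼ) = 0` the sum `∑ φⱼ` is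
the constant `∑ ‖x - kⱼ‖²`, positive because `x ∉ ⋂ Cⱼ`. The `φⱼ` with `kⱼ = x` vanish identically
and are dropped; the others are positive at `x`, hence at a nearby rational point.
-/

open scoped RealInnerProductSpace

section NearestPoint

variable {E : Type*} [NormedAddCommGroup E] [InnerProductSpace ℝ E] {ι : Type*} [Fintype ι]

theorem real_inner_sub_le_zero_of_forall_norm_le {K : Set E} (hK : Convex ℝ K) {u v : E}
    (hv : v ∈ K) (hmin : ∀ w ∈ K, ‖u - v‖ ≤ ‖u - w‖) : ∀ w ∈ K, ⟪u - v, w - v⟫ ≤ 0 := by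
  rw [← norm_eq_iInf_iff_real_inner_le_zero hK hv]
  have : Nonempty K := ⟨⟨v, hv⟩⟩
  have hbdd : BddBelow (Set.range fun w : K => ‖u - w‖) := ⟨0, by rintro _ ⟨w, rfl⟩; positivity⟩
  exact le_antisymm (le_ciInf fun w => hmin w w.2) (ciInf_le hbdd ⟨v, hv⟩)

theorem sum_sub_inv_card_smul_sum (k : ι → E) :
    ∑ j, ((Fintype.card ι : ℝ)⁻¹ • ∑ i, k i - k j) = 0 := by
  rcases isEmpty_or_nonempty ι with hι | hι
  · simp
  · rw [Finset.sum_sub_distrib, Finset.sum_const, Finset.card_univ, ← Nat.cast_smul_eq_nsmul ℝ,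
      smul_inv_smul₀ (by positivity), sub_self]

theorem sum_norm_sub_sq_le_of_sum_sub_eq_zero {c : E} {k : ι → E} (hc : ∑ j, (c - k j) = 0)
    (y : E) : ∑ j, ‖c - k j‖ ^ 2 ≤ ∑ j, ‖y - k j‖ ^ 2 := by
  have hsplit : ∀ j, ‖y - k j‖ ^ 2 = ‖y - c‖ ^ 2 + 2 * ⟪y - c, c - k j⟫ + ‖c - k j‖ ^ 2 := by
    intro j
    rw [← norm_add_sq_real, sub_add_sub_cancel]
  simp only [hsplit, Finset.sum_add_distrib, ← Finset.mul_sum, ← inner_sum, hc, inner_zero_right]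
  simp only [mul_zero, add_zero, le_add_iff_nonneg_left]
  positivity

theorem sum_inner_sub_eq_sum_norm_sq {x : E} {k : ι → E} (h : ∑ j, (x - k j) = 0) (y : E) :
    ∑ j, ⟪x - k j, y - k j⟫ = ∑ j, ‖x - k j‖ ^ 2 := by
  have hsplit : ∀ j, ⟪x - k j, y - k j⟫ = ⟪x - k j, y - x⟫ + ‖x - k j‖ ^ 2 := by
    intro j
    rw [← real_inner_self_eq_norm_sq, ← inner_add_right, sub_add_sub_cancel]
  simp only [hsplit, Finset.sum_add_distrib, ← sum_inner, h, inner_zero_left, zero_add]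

theorem exists_forall_inner_sub_le_zero (C : ι → Set E) (hconv : ∀ j, Convex ℝ (C j))
    (hcomp : ∀ j, IsCompact (C j)) (hne : ∀ j, (C j).Nonempty) :
    ∃ (x : E) (k : ι → E), ∑ j, (x - k j) = 0 ∧ (∀ j, k j ∈ C j) ∧
      ∀ j, ∀ y ∈ C j, ⟪x - k j, y - k j⟫ ≤ 0 := by
  classical
  set c : (ι → E) → E := fun k => (Fintype.card ι : ℝ)⁻¹ • ∑ i, k i
  obtain ⟨k, hk, hmin⟩ := (isCompact_univ_pi hcomp).exists_isMinOn
    (Set.univ_pi_nonempty_iff.2 hne)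
    (Continuous.continuousOn (f := fun k => ∑ j, ‖c k - k j‖ ^ 2) (by fun_prop))
  refine ⟨c k, k, sum_sub_inv_card_smul_sum k, fun j => hk j trivial, fun j =>
    real_inner_sub_le_zero_of_forall_norm_le (hconv j) (hk j trivial) fun y hy => ?_⟩
  have hupdate : Function.update k j y ∈ Set.univ.pi C := by
    intro i _
    rcases eq_or_ne i j with rfl | hij
    · simpa using hy
    · simpa [hij] using hk i trivial
  have hsum : ∀ g : E → ℝ, ∑ i, g (Function.update k j y i) = ∑ i, g (k i) - g (k j) + g y := by
    intro g
    simp only [Function.apply_update (fun _ => g), Finset.sum_update_of_mem (Finset.mem_univ j),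
      Finset.sum_eq_add_sum_sdiff_singleton_of_mem (Finset.mem_univ j) (fun i => g (k i))]
    ring
  have hle_update := isMinOn_iff.1 hmin _ hupdate
  have hcentroid := sum_norm_sub_sq_le_of_sum_sub_eq_zero
    (sum_sub_inv_card_smul_sum (Function.update k j y)) (c k)
  rw [hsum fun z => ‖c k - z‖ ^ 2] at hcentroid
  have : ‖c k - k j‖ ^ 2 ≤ ‖c k - y‖ ^ 2 := by
    simp only [c] at hle_update hcentroid ⊢
    linarith
  exact pow_le_pow_iff_left₀ (norm_nonneg _) (norm_nonneg _) two_ne_zero |>.1 this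

end NearestPoint

theorem exists_rat_forall_pos {κ ι : Type*} [Finite κ] [Finite ι] {φ : ι → (κ → ℝ) → ℝ}
    (hφ : ∀ j, Continuous (φ j)) {x : κ → ℝ} (hx : ∀ j, 0 < φ j x) :
    ∃ p : κ → ℚ, ∀ j, 0 < φ j (fun k => (p k : ℝ)) := by
  have hU : IsOpen {z | ∀ j, 0 < φ j z} := by
    simpa only [Set.ofPred_forall] using
      isOpen_iInter_of_finite fun j => isOpen_lt continuous_const (hφ j)
  exact (DenseRange.piMap fun _ => Rat.denseRange_cast).exists_mem_open hU ⟨x, hx⟩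

theorem Convex.exists_subfamily_card_le_iInter_eq_empty {𝕜 E ι : Type*} [Field 𝕜]
    [LinearOrder 𝕜] [IsStrictOrderedRing 𝕜] [AddCommGroup E] [Module 𝕜 E] [FiniteDimensional 𝕜 E]
    {F : ι → Set E} {s : Finset ι} (h_convex : ∀ i ∈ s, Convex 𝕜 (F i))
    (h_empty : ⋂ i ∈ s, F i = ∅) :
    ∃ I ⊆ s, I.card ≤ Module.finrank 𝕜 E + 1 ∧ ⋂ i ∈ I, F i = ∅ := by
  by_contra! h
  exact (Convex.helly_theorem' h_convex fun I hI hcard => h I hI hcard).ne_empty h_empty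

namespace CAPaper

theorem isAffine_inner_symm_sub {d : ℕ} (w k : EuclideanSpace ℝ (Fin d)) :
    IsAffine fun z => ⟪w, (EuclideanSpace.equiv (Fin d) ℝ).symm z - k⟫ :=
  ⟨EuclideanSpace.equiv (Fin d) ℝ w, -⟪w, k⟫, fun z => by
    simp [inner_sub_right, edot, PiLp.inner_apply, mul_comm, ← sub_eq_add_neg]⟩

theorem exists_affine_certificate {d : ℕ} {ι : Type*} [Fintype ι] (C : ι → Set (Fin d → ℝ))
    (hconv : ∀ j, Convex ℝ (C j)) (hcomp : ∀ j, IsCompact (C j)) (hne : ∀ j, (C j).Nonempty)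
    (hempty : ⋂ j, C j = ∅) :
    ∃ m ≤ Fintype.card ι, ∃ φ : Fin m → (Fin d → ℝ) → ℝ,
      (∀ j, IsAffine (φ j)) ∧ (∀ j, ∃ i, ∀ y ∈ C i, φ j y ≤ 0) ∧
      (∃ c : ℝ, 0 < c ∧ ∀ x, ∑ j, φ j x = c) ∧
      (∃ p : Fin d → ℚ, ∀ j, 0 < φ j (fun k => (p k : ℝ))) := by
  classical
  set e := EuclideanSpace.equiv (Fin d) ℝ
  obtain ⟨x, k, hsum, hk, hineq⟩ := exists_forall_inner_sub_le_zero (fun j => e ⁻¹' C j)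
    (fun j => (hconv j).linear_preimage e.toLinearMap)
    (fun j => e.toHomeomorph.isCompact_preimage.2 (hcomp j))
    (fun j => (hne j).preimage e.surjective)
  set ψ : ι → (Fin d → ℝ) → ℝ := fun j z => ⟪x - k j, e.symm z - k j⟫
  have hψ_sum : ∀ z, ∑ j : {j // x ≠ k j}, ψ j z = ∑ j, ‖x - k j‖ ^ 2 := by
    intro z
    calc ∑ j : {j // x ≠ k j}, ψ j z = ∑ j ∈ Finset.univ.filter (x ≠ k ·), ψ j z :=
          (Finset.sum_subtype (p := fun j => x ≠ k j) _ (by simp) (ψ · z)).symm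
      _ = ∑ j, ψ j z := Finset.sum_filter_of_ne fun j _ hj => by contrapose! hj; simp [ψ, hj]
      _ = _ := sum_inner_sub_eq_sum_norm_sq hsum (e.symm z)
  have hpos : 0 < ∑ j, ‖x - k j‖ ^ 2 := by
    obtain ⟨j, hj⟩ : ∃ j, x ∉ e ⁻¹' C j := by
      by_contra! h
      simpa [← Set.preimage_iInter, hempty] using Set.mem_iInter.2 h
    have : x ≠ k j := fun h => hj (h ▸ hk j)
    exact Finset.sum_pos' (fun j _ => by positivity)
      ⟨j, Finset.mem_univ _, pow_pos (norm_pos_iff.2 (sub_ne_zero.2 this)) 2⟩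
  set σ := (Fintype.equivFin {j // x ≠ k j}).symm
  refine ⟨Fintype.card {j // x ≠ k j}, Fintype.card_subtype_le _, fun t => ψ (σ t),
    fun t => isAffine_inner_symm_sub _ _, fun t => ⟨σ t, fun y hy => hineq _ _ (by simpa using hy)⟩,
    ⟨_, hpos, fun z => by rw [σ.sum_comp (fun j => ψ j z)]; exact hψ_sum z⟩,
    exists_rat_forall_pos (fun t => by fun_prop) (x := e x) fun t => ?_⟩
  simp only [ψ, e.symm_apply_apply, real_inner_self_eq_norm_sq]
  exact pow_pos (norm_pos_iff.2 (sub_ne_zero.2 (σ t).2)) 2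

variable {d : ℕ} {f : Config d → Bool}

theorem conf_le_conf {S T : Set (Site d)} (h : S ⊆ T) (i : Site d) : Conf S i ≤ Conf T i := by
  by_cases hi : i ∈ S
  · simp [Conf, hi, h hi]
  · simp [Conf, hi]

theorem ZeroSet.mono (hmono : Monotonic f) {S T : Set (Site d)} (hS : ZeroSet f S)
    (hST : S ⊆ T) : ZeroSet f T :=
  Bool.eq_false_of_le_false <|
    (hmono _ _ (conf_le_conf (Set.compl_subset_compl.2 hST))).trans_eq hS

theorem ZeroSet.nonempty (hmono : Monotonic f) (hf : ∃ x y : Config d, f x ≠ f y)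
    {S : Set (Site d)} (hS : ZeroSet f S) : S.Nonempty := by
  rw [Set.nonempty_iff_ne_empty]
  rintro rfl
  have hzero : ∀ x, f x = false := fun x =>
    Bool.eq_false_of_le_false <| (hmono _ _ fun i => by simp [Conf]).trans_eq hS
  obtain ⟨x, y, hxy⟩ := hf
  exact hxy ((hzero x).trans (hzero y).symm)

theorem ZeroSet.inter_support {Δ : Finset (Site d)} (hloc : IsLocal f Δ) {T : Set (Site d)}
    (hT : ZeroSet f T) : ZeroSet f (Δ ∩ T) :=
  (hloc _ _ fun i hi => by simp [Conf, hi]).trans hT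

theorem exists_finset_zeroSets_iInter_convexHull_eq_empty {Δ : Finset (Site d)}
    (hloc : IsLocal f Δ) (hσ : sigma0 f = ∅) :
    ∃ 𝒮 : Finset (Finset (Site d)), (∀ S ∈ 𝒮, ZeroSet f S) ∧
      ⋂ S ∈ 𝒮, convexHull ℝ (embed '' (S : Set (Site d))) = ∅ := by
  classical
  refine ⟨Δ.powerset.filter (fun S : Finset (Site d) => ZeroSet f S),
    fun S hS => (Finset.mem_filter.1 hS).2, Set.eq_empty_of_forall_notMem fun x hx => ?_⟩
  suffices x ∈ sigma0 f by simp [hσ] at this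
  refine Set.mem_iInter₂.2 fun T hT => ?_
  have hcoe : ((Δ.filter (· ∈ T) : Finset (Site d)) : Set (Site d)) = (Δ : Set (Site d)) ∩ T := by
    ext; simp
  have hsub : Δ.filter (· ∈ T) ∈ Δ.powerset.filter (fun S : Finset (Site d) => ZeroSet f S) := by
    simpa [hcoe] using hT.inter_support hloc
  refine convexHull_mono (Set.image_mono ?_) (Set.mem_iInter₂.1 hx _ hsub)
  exact hcoe ▸ Set.inter_subset_right

theorem exists_zeroSets_card_le {Δ : Finset (Site d)} (hloc : IsLocal f Δ) (hσ : sigma0 f = ∅) :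
    ∃ I : Finset (Finset (Site d)), I.card ≤ d + 1 ∧ (∀ S ∈ I, ZeroSet f S) ∧
      ⋂ S ∈ I, convexHull ℝ (embed '' (S : Set (Site d))) = ∅ := by
  obtain ⟨𝒮, h𝒮, hempty⟩ := exists_finset_zeroSets_iInter_convexHull_eq_empty hloc hσ
  obtain ⟨I, hI, hcard, hIempty⟩ := Convex.exists_subfamily_card_le_iInter_eq_empty
    (fun _ _ => convex_convexHull ℝ _) hempty
  exact ⟨I, by simpa using hcard, fun S hS => h𝒮 S (hI hS), hIempty⟩

/-- if `σ₀` is empty, there exist `m ≤ d+1` affine functions with the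
stated properties. -/
theorem stmt3 (d : ℕ) (f : Config d → Bool) (Δ : Finset (Site d))
    (hf : Standard f Δ) (hσ : sigma0 f = ∅) :
    ∃ m : ℕ, m ≤ d + 1 ∧ ∃ φ : Fin m → (Fin d → ℝ) → ℝ,
      (∀ j, IsAffine (φ j)) ∧
      (∀ j, ZeroSet f {i | φ j (embed i) ≤ 0}) ∧
      (∃ c : ℝ, 0 < c ∧ ∀ x, ∑ j, φ j x = c) ∧
      (∃ p : Fin d → ℚ, ∀ j, 0 < φ j (fun k => (p k : ℝ))) := by
  obtain ⟨hloc, hmono, hnc⟩ := hf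
  obtain ⟨I, hIcard, hIzero, hIempty⟩ := exists_zeroSets_card_le hloc hσ
  obtain ⟨m, hm, φ, hφ, hφC, hsum, hp⟩ := exists_affine_certificate
    (fun S : I => convexHull ℝ (embed '' (S : Set (Site d))))
    (fun _ => convex_convexHull ℝ _)
    (fun S => (S.1.finite_toSet.image _).isCompact_convexHull (𝕜 := ℝ))
    (fun S => (((hIzero S S.2).nonempty hmono hnc).image _).convexHull (𝕜 := ℝ))
    (by simpa [Set.iInter_subtype] using hIempty)
  refine ⟨m, hm.trans (by simpa using hIcard), φ, hφ, fun j => ?_, hsum, hp⟩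
  obtain ⟨S, hS⟩ := hφC j
  exact (hIzero S S.2).mono hmono fun i hi =>
    hS _ (subset_convexHull ℝ _ (Set.mem_image_of_mem _ hi))

end CAPaper
end

section
/- Let φ_1,…,φ_m be affine functions on ℝ^d. Then exactly one of the following two alternatives holds: (a) there exists x ∈ ℝ^d such that φ_1(x) > 0, …, φ_m(x) > 0; (b) there exist non-negative real numbers λ_1,…,λ_m, not all zero, such that the function λ_1φ_1 + ⋯ + λ_mφ_m is a constant function whose value is non-positive. -/
open MeasureTheory ENNReal

namespace CAPaper

/-- the alternative theorem for affine functions (Rockafellar, Thm 21.1). -/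
theorem stmt4 (d m : ℕ) (φ : Fin m → (Fin d → ℝ) → ℝ)
    (hφ : ∀ j, ∃ (a : Fin d → ℝ) (b : ℝ), ∀ x, φ j x = edot a x + b) :
    Xor' (∃ x : Fin d → ℝ, ∀ j, 0 < φ j x)
      (∃ l : Fin m → ℝ, (∀ j, 0 ≤ l j) ∧ (∃ j, l j ≠ 0) ∧
        ∃ c : ℝ, c ≤ 0 ∧ ∀ x : Fin d → ℝ, ∑ j, l j * φ j x = c) := by
  choose a b hab using hφ
  rcases em (∃ x : Fin d → ℝ, ∀ j, 0 < φ j x) with hP | hP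
  · refine Or.inl ⟨hP, ?_⟩
    rintro ⟨l, hl0, ⟨j0, hj0⟩, c, hc, hsum⟩
    obtain ⟨x, hx⟩ := hP
    have hpos : 0 < ∑ j, l j * φ j x := by
      refine Finset.sum_pos' (fun j _ => mul_nonneg (hl0 j) (hx j).le) ?_
      exact ⟨j0, Finset.mem_univ _, mul_pos (lt_of_le_of_ne (hl0 j0) (Ne.symm hj0)) (hx j0)⟩
    have := hsum x
    linarith
  · refine Or.inr ⟨?_, hP⟩
    -- separation setup
    set s : Set (Fin m → ℝ) := {y | ∀ j, 0 < y j} with hs_def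
    set t : Set (Fin m → ℝ) := {y | ∃ x, ∀ j, y j = φ j x} with ht_def
    have hs_open : IsOpen s := by
      have : s = ⋂ j, {y : Fin m → ℝ | 0 < y j} := by
        ext y; simp [hs_def, Set.mem_iInter]
      rw [this]
      exact isOpen_iInter_of_finite fun j => isOpen_lt continuous_const (continuous_apply j)
    have hs_conv : Convex ℝ s := by
      have : s = ⋂ j, {y : Fin m → ℝ | 0 < y j} := by
        ext y; simp [hs_def, Set.mem_iInter]
      rw [this]
      exact convex_iInter fun j =>
        convex_halfSpace_gt ⟨fun u v => rfl, fun c u => rfl⟩ 0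
    have hedot : ∀ (u v w : Fin d → ℝ) (p q : ℝ),
        edot u (p • v + q • w) = p * edot u v + q * edot u w := by
      intro u v w p q
      unfold edot
      rw [Finset.mul_sum, Finset.mul_sum, ← Finset.sum_add_distrib]
      refine Finset.sum_congr rfl fun k _ => ?_
      simp only [Pi.add_apply, Pi.smul_apply, smul_eq_mul]
      ring
    have ht_conv : Convex ℝ t := by
      rintro y1 ⟨x1, hx1⟩ y2 ⟨x2, hx2⟩ p q hp hq hpq
      refine ⟨p • x1 + q • x2, fun j => ?_⟩
      rw [hab j, hedot]
      simp only [Pi.add_apply, Pi.smul_apply, smul_eq_mul, hx1 j, hx2 j, hab j x1, hab j x2]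
      linear_combination (b j) * hpq
    have hdisj : Disjoint s t := by
      rw [Set.disjoint_left]
      rintro y hy ⟨x, hx⟩
      exact hP ⟨x, fun j => (hx j) ▸ hy j⟩
    obtain ⟨f, u, hfs, hft⟩ := geometric_hahn_banach_open hs_conv hs_open ht_conv hdisj
    set l : Fin m → ℝ := fun j => -(f (Pi.single j 1)) with hl_def
    have hf : ∀ y : Fin m → ℝ, f y = -∑ j, y j * l j := by
      intro y
      conv_lhs => rw [pi_eq_sum_univ y]
      rw [map_sum, ← Finset.sum_neg_distrib]
      refine Finset.sum_congr rfl fun j _ => ?_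
      rw [ContinuousLinearMap.map_smul, smul_eq_mul, hl_def]
      have : (fun j_1 => if j = j_1 then (1:ℝ) else 0) = Pi.single j 1 := by
        ext i; simp [Pi.single_apply, eq_comm]
      rw [this]; ring
    have hs_mem : ∀ p : Fin m → ℝ, (∀ j, 0 < p j) → -u < ∑ j, p j * l j := by
      intro p hp
      have := hfs p hp
      rw [hf] at this
      linarith
    have ht_mem : ∀ x : Fin d → ℝ, ∑ j, φ j x * l j ≤ -u := by
      intro x
      have := hft (fun j => φ j x) ⟨x, fun j => rfl⟩
      rw [hf] at this
      linarith
    have hone : -u < ∑ j, l j := by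
      have := hs_mem (fun _ => 1) (fun _ => one_pos)
      simpa using this
    have hl0 : ∀ j, 0 ≤ l j := by
      intro j0
      by_contra hneg
      push_neg at hneg
      set T : ℝ := (-u - ∑ j, l j) / l j0 with hT_def
      have hT : 0 < T := div_pos_of_neg_of_neg (by linarith) hneg
      have hmem : ∀ i, 0 < (1 + T * (if i = j0 then 1 else 0) : ℝ) := by
        intro i; by_cases h : i = j0 <;> simp [h] <;> linarith
      have hsum : ∑ i, (1 + T * (if i = j0 then 1 else 0)) * l i
          = (∑ i, l i) + T * l j0 := by
        have h1 : ∀ i, (1 + T * (if i = j0 then 1 else 0)) * l i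
            = l i + T * (if i = j0 then l i else 0) := by
          intro i; by_cases h : i = j0 <;> simp [h] <;> ring
        rw [Finset.sum_congr rfl (fun i _ => h1 i), Finset.sum_add_distrib,
          ← Finset.mul_sum, Finset.sum_ite_eq' Finset.univ j0 l,
          if_pos (Finset.mem_univ _)]
      have := hs_mem _ hmem
      rw [hsum] at this
      have hTl : T * l j0 = -u - ∑ j, l j := div_mul_cancel₀ _ (ne_of_lt hneg)
      linarith
    have hu : -u ≤ 0 := by
      by_contra h
      push_neg at h
      rcases le_or_gt (∑ j, l j) 0 with hS | hS
      · linarith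
      · set δ : ℝ := (-u) / (2 * ∑ j, l j) with hδ_def
        have hδ : 0 < δ := div_pos h (by linarith)
        have := hs_mem (fun _ => δ) (fun _ => hδ)
        have hcalc : ∑ j, (fun _ => δ) j * l j = δ * ∑ j, l j := by
          rw [← Finset.mul_sum]
        rw [hcalc] at this
        have : -u < -u / 2 := by
          have h2 : δ * ∑ j, l j = -u / 2 := by
            rw [hδ_def]; field_simp
          linarith
        linarith
    have hlne : ∃ j, l j ≠ 0 := by
      by_contra h
      push_neg at h
      have h0 : ∑ j, l j = 0 := Finset.sum_eq_zero fun j _ => h j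
      have := ht_mem 0
      have h1 : ∑ j, φ j 0 * l j = 0 := Finset.sum_eq_zero fun j _ => by rw [h j, mul_zero]
      linarith
    -- the affine representation of the combination
    set A : Fin d → ℝ := fun k => ∑ j, l j * a j k with hA_def
    set B : ℝ := ∑ j, l j * b j with hB_def
    have hrepr : ∀ x, ∑ j, φ j x * l j = edot A x + B := by
      intro x
      have h1 : ∀ j, φ j x * l j = (∑ k, l j * a j k * x k) + l j * b j := by
        intro j
        rw [hab j x]
        unfold edot
        rw [add_mul, Finset.sum_mul]
        congr 1
        · exact Finset.sum_congr rfl fun k _ => by ring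
        · ring
      rw [Finset.sum_congr rfl (fun j _ => h1 j), Finset.sum_add_distrib]
      congr 1
      rw [Finset.sum_comm]
      unfold edot
      refine Finset.sum_congr rfl fun k _ => ?_
      rw [hA_def, Finset.sum_mul]
    have hbound : ∀ x, edot A x + B ≤ -u := fun x => (hrepr x) ▸ ht_mem x
    have hQnn : (0:ℝ) ≤ ∑ k, A k * A k :=
      Finset.sum_nonneg fun k _ => mul_self_nonneg _
    have hA0 : ∀ k, A k = 0 := by
      have hQ0 : ∑ k, A k * A k = 0 := by
        by_contra hQ
        have hQpos : 0 < ∑ k, A k * A k := lt_of_le_of_ne hQnn (Ne.symm hQ)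
        set c : ℝ := (-u - B + 1) / (∑ k, A k * A k) with hc_def
        have hdot : edot A (c • A) = c * ∑ k, A k * A k := by
          unfold edot
          rw [Finset.mul_sum]
          exact Finset.sum_congr rfl fun k _ => by
            simp only [Pi.smul_apply, smul_eq_mul]; ring
        have := hbound (c • A)
        rw [hdot, hc_def, div_mul_cancel₀ _ (ne_of_gt hQpos)] at this
        linarith
      intro k
      have := (Finset.sum_eq_zero_iff_of_nonneg
        (fun k _ => mul_self_nonneg (A k))).mp hQ0 k (Finset.mem_univ k)
      exact mul_self_eq_zero.mp this
    have hedotA : ∀ x, edot A x = 0 := by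
      intro x
      unfold edot
      exact Finset.sum_eq_zero fun k _ => by rw [hA0 k, zero_mul]
    refine ⟨l, hl0, hlne, B, ?_, ?_⟩
    · have := hbound 0
      rw [hedotA 0] at this
      linarith
    · intro x
      have : ∑ j, l j * φ j x = ∑ j, φ j x * l j :=
        Finset.sum_congr rfl fun j _ => mul_comm _ _
      rw [this, hrepr x, hedotA x, zero_add]

end CAPaper
end

section
/- Let f : {0,1}^{ℤ^d} → {0,1} be a standard transition function and let p ∈ ℝ^d be a direction (‖p‖ = 1). Then there exists a real number V_p, not depending on C, such that for every C ∈ ℝ, D_f maps the front Conf({i ∈ ℤ^d : ⟨i,p⟩ ≤ C}) to the front Conf({i ∈ ℤ^d : ⟨i,p⟩ ≤ C + V_p}). -/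
open MeasureTheory ENNReal

namespace CAPaper

/-- a standard automaton moves every front in direction `p` by the same
amount `V_p`, independent of `C`. -/
theorem stmt9 (d : ℕ) (f : Config d → Bool) (Δ : Finset (Site d))
    (hf : Standard f Δ) (p : Fin d → ℝ) (hp : enorm p = 1) :
    ∃ V : ℝ, ∀ C : ℝ,
      Df f (Conf {i : Site d | edot (embed i) p ≤ C}) =
        Conf {i : Site d | edot (embed i) p ≤ C + V} := by
  classical
  obtain ⟨hloc, hmono, x0, y0, hne⟩ := hf
  set a : Site d → ℝ := fun j => edot (embed j) p with ha
  -- Δ nonempty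
  have hΔ : Δ.Nonempty := by
    rcases Finset.eq_empty_or_nonempty Δ with h | h
    · exact absurd (hloc x0 y0 (by simp [h])) hne
    · exact h
  -- extreme values of f
  have htop : f (fun _ => true) = true := by
    by_contra h
    rw [Bool.not_eq_true] at h
    exact hne ((le_antisymm (h ▸ hmono x0 (fun _ => true) fun i => Bool.le_true _)
      (Bool.false_le _)).trans
      (le_antisymm (h ▸ hmono y0 (fun _ => true) fun i => Bool.le_true _)
      (Bool.false_le _)).symm)
  have hbot : f (fun _ => false) = false := by
    by_contra h
    rw [Bool.not_eq_false] at h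
    exact hne ((le_antisymm (Bool.le_true _)
      (h ▸ hmono (fun _ => false) x0 fun i => Bool.false_le _)).trans
      (le_antisymm (Bool.le_true _)
      (h ▸ hmono (fun _ => false) y0 fun i => Bool.false_le _)).symm)
  set g : ℝ → Bool := fun t => f (fun j => if a j ≤ t then true else false) with hg
  have gmono : ∀ {t t'}, t ≤ t' → g t ≤ g t' := by
    intro t t' htt'
    refine hmono _ _ fun j => ?_
    by_cases h : a j ≤ t
    · simp [h, le_trans h htt']
    · simp [h, Bool.false_le]
  set A : Finset ℝ := Δ.image a with hA
  have hAne : A.Nonempty := hΔ.image a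
  have gtrue : ∀ t, A.max' hAne ≤ t → g t = true := by
    intro t ht
    show f (fun j => if a j ≤ t then true else false) = true
    have : f (fun j => if a j ≤ t then true else false) = f (fun _ => true) := by
      refine hloc _ _ fun j hj => ?_
      have : a j ≤ t := le_trans (A.le_max' _ (Finset.mem_image_of_mem a hj)) ht
      simp [this]
    rw [this, htop]
  have gfalse : ∀ t, t < A.min' hAne → g t = false := by
    intro t ht
    show f (fun j => if a j ≤ t then true else false) = false
    have : f (fun j => if a j ≤ t then true else false) = f (fun _ => false) := by
      refine hloc _ _ fun j hj => ?_
      have : ¬ a j ≤ t := not_le.mpr (lt_of_lt_of_le ht (A.min'_le _ (Finset.mem_image_of_mem a hj)))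
      simp [this]
    rw [this, hbot]
  set T : Set ℝ := {t | g t = true} with hT
  have hTne : T.Nonempty := ⟨A.max' hAne, gtrue _ le_rfl⟩
  have hTbdd : BddBelow T := by
    refine ⟨A.min' hAne, fun t ht => ?_⟩
    by_contra h
    have ht' : g t = true := ht
    rw [gfalse t (not_le.mp h)] at ht'
    exact Bool.false_ne_true ht'
  set s : ℝ := sInf T with hs
  -- for t > s, g t = true
  have gup : ∀ t, s < t → g t = true := by
    intro t hst
    obtain ⟨t', ht'T, ht't⟩ := exists_lt_of_csInf_lt hTne hst
    have ht'g : g t' = true := ht'T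
    exact le_antisymm (Bool.le_true _) (ht'g ▸ gmono (le_of_lt ht't))
  -- g s = true
  have gs : g s = true := by
    by_contra hgs
    set B : Finset ℝ := A.filter (fun x => s < x) with hB
    set δ : ℝ := if hB' : B.Nonempty then B.min' hB' - s else 1 with hδ
    have hδpos : 0 < δ := by
      rw [hδ]
      split
      · next hB' => exact sub_pos.mpr ((Finset.mem_filter.mp (B.min'_mem hB')).2)
      · norm_num
    have key : g (s + δ/2) = g s := by
      show f _ = f _
      refine hloc _ _ fun j hj => ?_
      by_cases h : a j ≤ s
      · have h2 : a j ≤ s + δ/2 := by linarith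
        simp [h, h2]
      · have haB : a j ∈ B := Finset.mem_filter.mpr ⟨Finset.mem_image_of_mem a hj, not_le.mp h⟩
        have hBne : B.Nonempty := ⟨a j, haB⟩
        have : δ ≤ a j - s := by
          rw [hδ, dif_pos hBne]
          exact sub_le_sub_right (B.min'_le _ haB) s
        have h2 : ¬ a j ≤ s + δ/2 := by push_neg; linarith
        simp [h, h2]
    rw [gup (s + δ/2) (by linarith)] at key
    exact hgs key.symm
  -- conclusion: g t = true ↔ s ≤ t
  have giff : ∀ t, (g t = true ↔ s ≤ t) := by
    intro t
    constructor
    · intro h; exact csInf_le hTbdd h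
    · intro h; exact le_antisymm (Bool.le_true _) (gs ▸ gmono h)
  refine ⟨-s, fun C => ?_⟩
  funext i
  have hdot : ∀ j : Site d, edot (embed (i + j)) p = edot (embed i) p + edot (embed j) p := by
    intro j
    simp only [edot, embed]
    rw [← Finset.sum_add_distrib]
    refine Finset.sum_congr rfl fun k _ => ?_
    have : ((i + j) k : ℝ) = (i k : ℝ) + (j k : ℝ) := by
      simp [Pi.add_apply]
    rw [this, add_mul]
  have lhs_eq : Df f (Conf {i : Site d | edot (embed i) p ≤ C}) i
      = g (C - edot (embed i) p) := by
    show f _ = f _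
    congr 1
    funext j
    simp only [Conf, Set.mem_setOf_eq]
    have hiff : (edot (embed (i + j)) p ≤ C) ↔ (a j ≤ C - edot (embed i) p) := by
      rw [hdot j]
      show _ ↔ edot (embed j) p ≤ C - edot (embed i) p
      constructor <;> intro <;> linarith
    exact if_congr hiff rfl rfl
  rw [lhs_eq, Conf]
  by_cases h : edot (embed i) p ≤ C + -s
  · simp only [Set.mem_setOf_eq, h, if_true]
    exact (giff _).mpr (by linarith)
  · simp only [Set.mem_setOf_eq, h, if_false]
    rw [← Bool.not_eq_true]
    rw [giff]
    intro h2
    exact h (by linarith)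

end CAPaper
end

section
/- Let D be the deterministic NEC automaton on {0,1}^{ℤ²} and let x be a configuration with x(i,0) = 1 for all i ∈ ℤ, x(0,j) = 1 for all j ∈ ℤ, and x(i,−i) = 1 for all i ∈ ℤ (the infinite 'spider' consisting of both coordinate axes and the line i+j = 0). Then for every t ∈ ℕ, the configuration D^t x equals 1 at every site (i,j) with i ≤ 0, j ≤ 0 and i+j ≥ −t. -/
open MeasureTheory ENNReal

namespace CAPaper

/-- Majority of three Boolean values: `1` iff at least two of them are `1`. -/
def major (a b c : Bool) : Bool := (a && b) || ((a && c) || (b && c))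

/-- The deterministic NEC (North-East-Center) automaton on `{0,1}^{ℤ²}`. -/
def Dnec (x : ℤ × ℤ → Bool) : ℤ × ℤ → Bool :=
  fun p => major (x (p.1, p.2 + 1)) (x (p.1 + 1, p.2)) (x (p.1, p.2))

/-- The deterministic NSMM (North-South maximum of minima) automaton on `{0,1}^{ℤ²}`. -/
def Dnsmm (x : ℤ × ℤ → Bool) : ℤ × ℤ → Bool :=
  fun p => max (min (x (p.1, p.2)) (x (p.1 + 1, p.2)))
               (min (x (p.1, p.2 + 1)) (x (p.1 + 1, p.2 + 1)))

/-- the infinite spider (both axes and the antidiagonal) filled with ones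
forces, after `t` steps of the NEC automaton, ones on the whole triangle
`{(i,j) : i ≤ 0, j ≤ 0, i + j ≥ −t}`. -/
theorem stmt10 (x : ℤ × ℤ → Bool)
    (hx1 : ∀ i : ℤ, x (i, 0) = true)
    (hx2 : ∀ j : ℤ, x (0, j) = true)
    (hx3 : ∀ i : ℤ, x (i, -i) = true) :
    ∀ (t : ℕ) (i j : ℤ), i ≤ 0 → j ≤ 0 → -(t : ℤ) ≤ i + j →
      Dnec^[t] x (i, j) = true := by
  have axes : ∀ t : ℕ, (∀ i : ℤ, Dnec^[t] x (i, 0) = true) ∧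
      (∀ j : ℤ, Dnec^[t] x (0, j) = true) := by
    intro t
    induction t with
    | zero => exact ⟨hx1, hx2⟩
    | succ t ih =>
      obtain ⟨h1, h2⟩ := ih
      constructor
      · intro i
        rw [Function.iterate_succ_apply']
        simp [Dnec, major, h1 i, h1 (i + 1)]
      · intro j
        rw [Function.iterate_succ_apply']
        simp [Dnec, major, h2 j, h2 (j + 1)]
  intro t
  induction t with
  | zero =>
    intro i j hi hj hij
    have hi0 : i = 0 := by omega
    have hj0 : j = 0 := by omega
    subst hi0; subst hj0
    simpa using hx1 0
  | succ t ih =>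
    intro i j hi hj hij
    rcases eq_or_lt_of_le hi with h | h
    · subst h; exact (axes (t + 1)).2 j
    rcases eq_or_lt_of_le hj with h' | h'
    · subst h'; exact (axes (t + 1)).1 i
    rw [Function.iterate_succ_apply']
    have e1 : Dnec^[t] x (i, j + 1) = true := ih i (j + 1) hi (by omega) (by omega)
    have e2 : Dnec^[t] x (i + 1, j) = true := ih (i + 1) j (by omega) hj (by omega)
    simp [Dnec, major, e1, e2]

end CAPaper
end

section
/- Let D be the deterministic NEC automaton on {0,1}^{ℤ²}, let L ≥ 1 be an integer, and let x be a configuration that equals 1 on the finite spider SP_{(0,0),L} = {(i,0) : −8L ≤ i ≤ 4L} ∪ {(0,j) : −8L ≤ j ≤ 4L} ∪ {(i,j) : i+j = 0, −6L ≤ i ≤ 6L}. Then the configuration D^{4L} x equals 1 at every site (i,j) ∈ ℤ² with ‖(i,j) − (−L,−L)‖ ≤ L (Euclidean norm), i.e. the iterated configuration is filled with ones on the sphere S_{(−L,−L),L}. -/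
open MeasureTheory ENNReal

namespace CAPaper

/-- the finite spider `SP_{(0,0),L}` filled with ones forces, after `4L`
steps of the NEC automaton, ones on the Euclidean sphere `S_{(−L,−L),L}`. -/
theorem stmt11 (L : ℕ) (hL : 1 ≤ L) (x : ℤ × ℤ → Bool)
    (hx1 : ∀ i : ℤ, -8 * (L : ℤ) ≤ i → i ≤ 4 * L → x (i, 0) = true)
    (hx2 : ∀ j : ℤ, -8 * (L : ℤ) ≤ j → j ≤ 4 * L → x (0, j) = true)
    (hx3 : ∀ i : ℤ, -6 * (L : ℤ) ≤ i → i ≤ 6 * L → x (i, -i) = true) :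
    ∀ i j : ℤ, Real.sqrt (((i : ℝ) + L) ^ 2 + ((j : ℝ) + L) ^ 2) ≤ L →
      Dnec^[4 * L] x (i, j) = true := by
  have key : ∀ t : ℕ, t ≤ 4 * L →
      (∀ i : ℤ, -8 * (L : ℤ) ≤ i → i ≤ 4 * (L : ℤ) - t → Dnec^[t] x (i, 0) = true) ∧
      (∀ j : ℤ, -8 * (L : ℤ) ≤ j → j ≤ 4 * (L : ℤ) - t → Dnec^[t] x (0, j) = true) ∧
      (∀ i j : ℤ, i ≤ 0 → j ≤ 0 → -(t : ℤ) ≤ i + j → Dnec^[t] x (i, j) = true) := by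
    intro t
    induction t with
    | zero =>
      intro _
      refine ⟨fun i h1 h2 => hx1 i h1 (by omega),
              fun j h1 h2 => hx2 j h1 (by omega),
              fun i j hi hj hij => ?_⟩
      have hi0 : i = 0 := by omega
      have hj0 : j = 0 := by omega
      subst hi0; subst hj0
      exact hx1 0 (by omega) (by omega)
    | succ t ih =>
      intro ht
      obtain ⟨hA, hB, hT⟩ := ih (by omega)
      have step : ∀ p : ℤ × ℤ, Dnec^[t + 1] x p = Dnec (Dnec^[t] x) p := by
        intro p; rw [Function.iterate_succ_apply']
      refine ⟨?_, ?_, ?_⟩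
      · intro i h1 h2
        rw [step]
        have e1 : Dnec^[t] x (i, 0) = true := hA i h1 (by omega)
        have e2 : Dnec^[t] x (i + 1, 0) = true := hA (i + 1) (by omega) (by omega)
        simp [Dnec, major, e1, e2]
      · intro j h1 h2
        rw [step]
        have e1 : Dnec^[t] x (0, j) = true := hB j h1 (by omega)
        have e2 : Dnec^[t] x (0, j + 1) = true := hB (j + 1) (by omega) (by omega)
        simp [Dnec, major, e1, e2]
      · intro i j hi hj hij
        rw [step]
        by_cases hj0 : j = 0
        · subst hj0
          have e1 : Dnec^[t] x (i, 0) = true := hA i (by omega) (by omega)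
          have e2 : Dnec^[t] x (i + 1, 0) = true := hA (i + 1) (by omega) (by omega)
          simp [Dnec, major, e1, e2]
        · by_cases hi0 : i = 0
          · subst hi0
            have e1 : Dnec^[t] x (0, j) = true := hB j (by omega) (by omega)
            have e2 : Dnec^[t] x (0, j + 1) = true := hB (j + 1) (by omega) (by omega)
            simp [Dnec, major, e1, e2]
          · have e1 : Dnec^[t] x (i, j + 1) = true :=
              hT i (j + 1) (by omega) (by omega) (by omega)
            have e2 : Dnec^[t] x (i + 1, j) = true :=
              hT (i + 1) j (by omega) (by omega) (by omega)
            simp [Dnec, major, e1, e2]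
  intro i j hij
  obtain ⟨-, -, hT⟩ := key (4 * L) le_rfl
  have hs : (0 : ℝ) ≤ ((i : ℝ) + L) ^ 2 + ((j : ℝ) + L) ^ 2 := by positivity
  have hsq : ((i : ℝ) + L) ^ 2 + ((j : ℝ) + L) ^ 2 ≤ (L : ℝ) ^ 2 := by
    nlinarith [Real.sq_sqrt hs, Real.sqrt_nonneg (((i : ℝ) + L) ^ 2 + ((j : ℝ) + L) ^ 2)]
  have hLpos : (1 : ℝ) ≤ (L : ℝ) := by exact_mod_cast hL
  have hi1 : (i : ℝ) ≤ 0 := by nlinarith [sq_nonneg ((j : ℝ) + L)]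
  have hj1 : (j : ℝ) ≤ 0 := by nlinarith [sq_nonneg ((i : ℝ) + L)]
  have hi2 : -2 * (L : ℝ) ≤ i := by nlinarith [sq_nonneg ((j : ℝ) + L)]
  have hj2 : -2 * (L : ℝ) ≤ j := by nlinarith [sq_nonneg ((i : ℝ) + L)]
  have hi' : i ≤ 0 := by exact_mod_cast hi1
  have hj' : j ≤ 0 := by exact_mod_cast hj1
  have hi2' : -2 * (L : ℤ) ≤ i := by exact_mod_cast hi2
  have hj2' : -2 * (L : ℤ) ≤ j := by exact_mod_cast hj2
  exact hT i j hi' hj' (by push_cast; omega)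

end CAPaper
end

section
/- Let D be the deterministic NSMM automaton on {0,1}^{ℤ²}, let L ≥ 1 be an integer, and let x be a configuration with x(i,0) = 1 for all integers i with −3L ≤ i ≤ 3L. Then the configuration D^{2L} x equals 1 at every site (i,j) ∈ ℤ² with ‖(i,j) − (0,−L)‖ ≤ L (Euclidean norm), i.e. D^{2L} x is filled with ones on the sphere S_{(0,−L),L}. -/
open MeasureTheory ENNReal

namespace CAPaper

lemma ones_spread (x : ℤ × ℤ → Bool) (a b : ℤ)
    (hx : ∀ i : ℤ, a ≤ i → i ≤ b → x (i, 0) = true) :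
    ∀ t : ℕ, ∀ i j : ℤ, a ≤ i → i ≤ b - t → -(t : ℤ) ≤ j → j ≤ 0 →
      Dnsmm^[t] x (i, j) = true := by
  intro t
  induction t with
  | zero =>
    intro i j h1 h2 h3 h4
    have hj : j = 0 := by omega
    subst hj
    exact hx i h1 (by omega)
  | succ t ih =>
    intro i j h1 h2 h3 h4
    rw [Function.iterate_succ_apply']
    have ht : ((t : ℤ) + 1 : ℤ) = ((t + 1 : ℕ) : ℤ) := by push_cast; ring
    rcases lt_or_eq_of_le h4 with hj | hj
    · have e1 : Dnsmm^[t] x (i, j + 1) = true :=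
        ih i (j + 1) h1 (by push_cast at h2 ⊢; omega) (by push_cast at h3 ⊢; omega) (by omega)
      have e2 : Dnsmm^[t] x (i + 1, j + 1) = true :=
        ih (i + 1) (j + 1) (by omega) (by push_cast at h2 ⊢; omega)
          (by push_cast at h3 ⊢; omega) (by omega)
      simp [Dnsmm, e1, e2]
    · have e1 : Dnsmm^[t] x (i, j) = true :=
        ih i j h1 (by push_cast at h2 ⊢; omega) (by omega) h4
      have e2 : Dnsmm^[t] x (i + 1, j) = true :=
        ih (i + 1) j (by omega) (by push_cast at h2 ⊢; omega) (by omega) h4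
      simp [Dnsmm, e1, e2]

/-- a horizontal segment `{(i,0) : −3L ≤ i ≤ 3L}` of ones forces, after `2L`
steps of the NSMM automaton, ones on the Euclidean sphere `S_{(0,−L),L}`. -/
theorem stmt14 (L : ℕ) (hL : 1 ≤ L) (x : ℤ × ℤ → Bool)
    (hx : ∀ i : ℤ, -3 * (L : ℤ) ≤ i → i ≤ 3 * L → x (i, 0) = true) :
    ∀ i j : ℤ, Real.sqrt ((i : ℝ) ^ 2 + ((j : ℝ) + L) ^ 2) ≤ L →
      Dnsmm^[2 * L] x (i, j) = true := by
  intro i j hsq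
  have hnn : (0 : ℝ) ≤ (i : ℝ) ^ 2 + ((j : ℝ) + L) ^ 2 := by positivity
  have hA : (i : ℝ) ^ 2 + ((j : ℝ) + L) ^ 2 ≤ (L : ℝ) ^ 2 := by
    nlinarith [Real.sq_sqrt hnn, Real.sqrt_nonneg ((i : ℝ) ^ 2 + ((j : ℝ) + L) ^ 2)]
  have hi1 : -(L : ℝ) ≤ (i : ℝ) := by nlinarith
  have hi2 : (i : ℝ) ≤ L := by nlinarith
  have hj1 : -(L : ℝ) ≤ (j : ℝ) + L := by nlinarith
  have hj2 : (j : ℝ) + L ≤ L := by nlinarith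
  have Hi1 : -(L : ℤ) ≤ i := by exact_mod_cast hi1
  have Hi2 : i ≤ (L : ℤ) := by exact_mod_cast hi2
  have Hj1 : -2 * (L : ℤ) ≤ j := by
    have : -(L : ℝ) - L ≤ (j : ℝ) := by linarith
    have h' : (-(L : ℤ) - L : ℤ) ≤ j := by exact_mod_cast this
    omega
  have Hj2 : j ≤ 0 := by
    have : (j : ℝ) ≤ 0 := by linarith
    exact_mod_cast this
  have := ones_spread x (-3 * (L : ℤ)) (3 * L) hx (2 * L) i j (by omega)
    (by push_cast; omega) (by push_cast; omega) Hj2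
  exact this

end CAPaper
end

section
/- Let S be a finite set with at least two elements, let d ≥ 1, and let μ be a probability measure on Ω = S^{ℤ^d} (product σ-algebra). Suppose there is δ > 0 such that for every site i ∈ ℤ^d and every value a ∈ S, the conditional expectation (with respect to μ) of the indicator of the event {x : x_i = a}, given the σ-algebra generated by the coordinates (x_j)_{j ≠ i}, is at least δ, μ-almost everywhere. Then for every configuration z ∈ Ω and every finite set Λ ⊂ ℤ^d, μ({x ∈ Ω : x_i = z_i for all i ∈ Λ}) ≤ (1−δ)^{|Λ|}. (In particular, uniformly non-null measures have the alignment-suppression property: −ln μ(z_Λ) grows at least linearly in |Λ|.) -/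
/-!
Write `P_i(a | x)` for the conditional probability that `x_i = a` given the coordinates off `i`.
Since `S` has a second value `b ≠ a`, the events `{x_i = a}` and `{x_i = b}` are disjoint, so
`P_i(a | x) ≤ 1 - P_i(b | x) ≤ 1 - δ`. Fixing one more site `i ∉ Λ` of the cylinder `z_Λ` then
costs a factor `1 - δ`: the cylinder `z_Λ` is measurable with respect to the coordinates off `i`,
so `μ(z_{Λ ∪ {i}}) = ∫_{z_Λ} P_i(z_i | x) dμ ≤ (1 - δ) μ(z_Λ)`, and induction on `Λ` concludes.
-/

open MeasureTheory

namespace CAPaper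

section CondExp

variable {Ω : Type*} {m m₀ : MeasurableSpace Ω} {μ : Measure Ω} [IsFiniteMeasure μ]

lemma condExp_indicator_le_one_sub_of_disjoint (hm : m ≤ m₀) {A B : Set Ω}
    (hA : MeasurableSet A) (hB : MeasurableSet B) (hAB : Disjoint A B) {δ : ℝ}
    (hδ : ∀ᵐ x ∂μ, δ ≤ μ[B.indicator (fun _ => (1 : ℝ)) | m] x) :
    ∀ᵐ x ∂μ, μ[A.indicator (fun _ => (1 : ℝ)) | m] x ≤ 1 - δ := by
  have hintA := (integrable_const (1 : ℝ) (μ := μ)).indicator hA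
  have hintB := (integrable_const (1 : ℝ) (μ := μ)).indicator hB
  have hsum : A.indicator (fun _ => (1 : ℝ)) + B.indicator (fun _ => 1) ≤ fun _ => 1 := by
    rw [Pi.add_def, ← Set.indicator_union_of_disjoint hAB]
    exact Set.indicator_le_self' fun _ _ => zero_le_one
  filter_upwards [condExp_mono (m := m) (hintA.add hintB) (integrable_const 1) (.of_forall hsum),
    condExp_add hintA hintB m, hδ] with x hmono hadd hx
  rw [condExp_const hm, hadd, Pi.add_apply] at hmono
  linarith

lemma measure_inter_le_of_condExp_indicator_le (hm : m ≤ m₀) {A B : Set Ω}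
    (hA : MeasurableSet A) (hB : MeasurableSet[m] B) {c : ℝ} (hc : 0 ≤ c)
    (hle : ∀ᵐ x ∂μ, μ[A.indicator (fun _ => (1 : ℝ)) | m] x ≤ c) :
    μ (A ∩ B) ≤ ENNReal.ofReal c * μ B := by
  have hreal : μ.real (A ∩ B) ≤ c * μ.real B := calc
    μ.real (A ∩ B) = ∫ x in B, A.indicator (fun _ => (1 : ℝ)) x ∂μ := by
      rw [setIntegral_indicator hA, setIntegral_const, smul_eq_mul, mul_one, Set.inter_comm]
    _ = ∫ x in B, μ[A.indicator (fun _ => (1 : ℝ)) | m] x ∂μ :=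
      (setIntegral_condExp hm ((integrable_const 1).indicator hA) hB).symm
    _ ≤ ∫ _ in B, c ∂μ :=
      setIntegral_mono_ae integrable_condExp.integrableOn (integrable_const c).integrableOn hle
    _ = c * μ.real B := by rw [setIntegral_const, smul_eq_mul, mul_comm]
  rw [← ofReal_measureReal, ← ofReal_measureReal, ← ENNReal.ofReal_mul hc]
  exact ENNReal.ofReal_le_ofReal hreal

end CondExp

section Configurations

variable {ι S : Type*}

def cylinder (z : ι → S) (Λ : Finset ι) : Set (ι → S) := {x | ∀ i ∈ Λ, x i = z i}

lemma cylinder_insert [DecidableEq ι] (z : ι → S) (i : ι) (Λ : Finset ι) :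
    cylinder z (insert i Λ) = {x | x i = z i} ∩ cylinder z Λ :=
  Set.ext fun _ => Finset.forall_mem_insert _ _ _

variable [MeasurableSpace S]

abbrev sigmaOutside (i : ι) : MeasurableSpace (ι → S) :=
  MeasurableSpace.comap (fun x (j : {j : ι // j ≠ i}) => x j) MeasurableSpace.pi

lemma sigmaOutside_le (i : ι) : sigmaOutside (S := S) i ≤ MeasurableSpace.pi :=
  (measurable_pi_lambda _ fun j => measurable_pi_apply j.1).comap_le

lemma measurable_apply_sigmaOutside {i j : ι} (hj : j ≠ i) :
    Measurable[sigmaOutside i] fun x : ι → S => x j :=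
  fun _ hs => ⟨_, measurable_pi_apply (⟨j, hj⟩ : {j : ι // j ≠ i}) hs, rfl⟩

variable [MeasurableSingletonClass S]

lemma measurableSet_apply_eq {m : MeasurableSpace (ι → S)} {i : ι}
    (hi : Measurable[m] fun x : ι → S => x i) (a : S) : MeasurableSet[m] {x | x i = a} :=
  hi (measurableSet_singleton a)

lemma measurableSet_cylinder {m : MeasurableSpace (ι → S)} (z : ι → S) (Λ : Finset ι)
    (h : ∀ j ∈ Λ, Measurable[m] fun x : ι → S => x j) : MeasurableSet[m] (cylinder z Λ) := by
  simpa only [cylinder, Set.ofPred_forall] using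
    Finset.measurableSet_biInter Λ fun j hj => measurableSet_apply_eq (h j hj) (z j)

lemma condExp_indicator_apply_eq_le_one_sub [Nontrivial S]
    {μ : Measure (ι → S)} [IsFiniteMeasure μ] {δ : ℝ}
    (h : ∀ i a, ∀ᵐ x ∂μ, δ ≤ μ[{y | y i = a}.indicator (fun _ => (1 : ℝ)) | sigmaOutside i] x)
    (i : ι) (a : S) :
    ∀ᵐ x ∂μ, μ[{y | y i = a}.indicator (fun _ => (1 : ℝ)) | sigmaOutside i] x ≤ 1 - δ := by
  obtain ⟨b, hba⟩ := exists_ne a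
  refine condExp_indicator_le_one_sub_of_disjoint (sigmaOutside_le i)
    (measurableSet_apply_eq (measurable_pi_apply i) _)
    (measurableSet_apply_eq (measurable_pi_apply i) _) ?_ (h i b)
  exact Set.disjoint_left.mpr fun x hxa hxb => hba (hxb.symm.trans hxa)

lemma measure_cylinder_le_pow {μ : Measure (ι → S)}
    [IsProbabilityMeasure μ] {c : ℝ} (hc : 0 ≤ c)
    (hle : ∀ i a, ∀ᵐ x ∂μ, μ[{y | y i = a}.indicator (fun _ => (1 : ℝ)) | sigmaOutside i] x ≤ c)
    (z : ι → S) (Λ : Finset ι) :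
    μ (cylinder z Λ) ≤ ENNReal.ofReal c ^ Λ.card := by
  classical
  induction Λ using Finset.induction_on with
  | empty => simp [cylinder]
  | insert i Λ hi ih =>
    have hΛ : MeasurableSet[sigmaOutside i] (cylinder z Λ) :=
      measurableSet_cylinder z Λ fun j hj =>
        measurable_apply_sigmaOutside fun hji => hi (hji ▸ hj)
    rw [cylinder_insert, Finset.card_insert_of_notMem hi, pow_succ']
    calc μ ({x | x i = z i} ∩ cylinder z Λ)
        ≤ ENNReal.ofReal c * μ (cylinder z Λ) :=
          measure_inter_le_of_condExp_indicator_le (sigmaOutside_le i)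
            (measurableSet_apply_eq (measurable_pi_apply i) _) hΛ hc (hle i (z i))
      _ ≤ ENNReal.ofReal c * ENNReal.ofReal c ^ Λ.card := by gcongr

end Configurations

theorem stmt16_general (d : ℕ) (S : Type*) [Nontrivial S]
    [MeasurableSpace S] [MeasurableSingletonClass S]
    (μ : Measure ((Fin d → ℤ) → S)) (hprob : IsProbabilityMeasure μ)
    (δ : ℝ)
    (h : ∀ (i : Fin d → ℤ) (a : S),
      ∀ᵐ x ∂μ, δ ≤
        (μ[Set.indicator {y : (Fin d → ℤ) → S | y i = a} (fun _ => (1 : ℝ)) |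
          MeasurableSpace.comap
            (fun (x : (Fin d → ℤ) → S) (j : {j : Fin d → ℤ // j ≠ i}) => x j)
            MeasurableSpace.pi]) x) :
    ∀ (z : (Fin d → ℤ) → S) (Λ : Finset (Fin d → ℤ)),
      μ {x | ∀ i ∈ Λ, x i = z i} ≤ ENNReal.ofReal ((1 - δ) ^ Λ.card) := by
  intro z Λ
  have hupper := condExp_indicator_apply_eq_le_one_sub h
  have hδ : 0 ≤ 1 - δ := by
    obtain ⟨x, hlow, hup⟩ := ((h (fun _ => 0) (z 0)).and (hupper (fun _ => 0) (z 0))).exists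
    linarith [hlow.trans hup]
  rw [ENNReal.ofReal_pow hδ]
  exact measure_cylinder_le_pow hδ hupper z Λ

/-- a uniformly non-null probability measure on `S^{ℤ^d}` (single-site
conditional probabilities bounded below by `δ` a.e.) has the alignment-suppression
property: every cylinder `z_Λ` has probability at most `(1−δ)^{|Λ|}`. -/
theorem stmt16 (d : ℕ) (hd : 1 ≤ d) (S : Type*) [Fintype S] [Nontrivial S]
    [MeasurableSpace S] [MeasurableSingletonClass S]
    (μ : Measure ((Fin d → ℤ) → S)) (hprob : IsProbabilityMeasure μ)
    (δ : ℝ) (hδ : 0 < δ)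
    (h : ∀ (i : Fin d → ℤ) (a : S),
      ∀ᵐ x ∂μ, δ ≤
        (μ[Set.indicator {y : (Fin d → ℤ) → S | y i = a} (fun _ => (1 : ℝ)) |
          MeasurableSpace.comap
            (fun (x : (Fin d → ℤ) → S) (j : {j : Fin d → ℤ // j ≠ i}) => x j)
            MeasurableSpace.pi]) x) :
    ∀ (z : (Fin d → ℤ) → S) (Λ : Finset (Fin d → ℤ)),
      μ {x | ∀ i ∈ Λ, x i = z i} ≤ ENNReal.ofReal ((1 - δ) ^ Λ.card) :=
  stmt16_general d S μ hprob δ h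

end CAPaper
end
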